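/- arXiv:1902.10246 — 3 statements merged into one kernel-verified Lean document; each statement's English description precedes it below -/
import Mathlib

section
/- Let V be a countable vocabulary and let 0 < α < 1/2. For a finite sequence of words w₁, …, w_T from V, define its FOFE code as the function z : V → ℝ given by z(v) = Σ_{t=1}^{T} α^{T−t} · 𝟙[w_t = v] (equivalently, z is obtained by the recursion z₀ = 0, z_t = α·z_{t−1} + e_{w_t}, where e_w is the one-hot indicator of w). Then the FOFE encoding is injective on sequences of a fixed finite length T: if two sequences w, w' of length T from V satisfy Σ_{t=1}^{T} α^{T−t} 𝟙[w_t = v] = Σ_{t=1}^{T} α^{T−t} 𝟙[w'_t = v] for every v ∈ V, then w_t = w'_t for all t. -/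
def fofeCode {V : Type*} [DecidableEq V] (α : ℝ) {T : ℕ} (w : Fin T → V) : V → ℝ :=
  fun v => ∑ t : Fin T, α ^ (T - 1 - t.val) * (if w t = v then 1 else 0)

lemma fofe_snoc {V : Type*} [DecidableEq V] (α : ℝ) (T : ℕ) (w : Fin (T+1) → V) (v : V) :
    fofeCode α w v = α * fofeCode α (fun i : Fin T => w i.castSucc) v
      + (if w (Fin.last T) = v then 1 else 0) := by
  unfold fofeCode
  rw [Fin.sum_univ_castSucc, Finset.mul_sum]
  congr 1
  · apply Finset.sum_congr rfl
    intro i _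
    have h1 : (T + 1) - 1 - (i.castSucc : Fin (T+1)).val = (T - 1 - i.val) + 1 := by
      have := i.isLt; simp [Fin.coe_castSucc]; omega
    rw [h1, pow_succ]
    ring
  · simp

lemma fofe_nonneg {V : Type*} [DecidableEq V] {α : ℝ} (hα : 0 ≤ α) {T : ℕ}
    (w : Fin T → V) (v : V) : 0 ≤ fofeCode α w v := by
  apply Finset.sum_nonneg
  intro t _
  positivity

lemma fofe_le {V : Type*} [DecidableEq V] {α : ℝ} (hα0 : 0 ≤ α) (hα : α < 1) {T : ℕ}
    (w : Fin T → V) (v : V) : fofeCode α w v ≤ (1 - α)⁻¹ := by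
  have h1 : fofeCode α w v ≤ ∑ j ∈ Finset.range T, α ^ j := by
    have : fofeCode α w v ≤ ∑ t : Fin T, α ^ (T - 1 - t.val) := by
      apply Finset.sum_le_sum
      intro t _
      have : (if w t = v then (1:ℝ) else 0) ≤ 1 := by split <;> norm_num
      nlinarith [pow_nonneg hα0 (T - 1 - t.val)]
    calc fofeCode α w v ≤ ∑ t : Fin T, α ^ (T - 1 - t.val) := this
      _ = ∑ j ∈ Finset.range T, α ^ (T - 1 - j) := by
          exact Fin.sum_univ_eq_sum_range (fun j => α ^ (T - 1 - j)) T
      _ = ∑ j ∈ Finset.range T, α ^ j := Finset.sum_range_reflect (fun j => α ^ j) T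
  have h2 : ∑ j ∈ Finset.range T, α ^ j ≤ (1 - α)⁻¹ := by
    have hne : α ≠ 1 := ne_of_lt hα
    rw [geom_sum_eq hne]
    rw [div_le_iff_of_neg (by linarith)]
    have := pow_nonneg hα0 T
    have := pow_le_one₀ hα0 (le_of_lt hα) (n := T)
    rw [inv_mul_eq_div, div_le_iff₀ (by linarith : (0:ℝ) < 1 - α)]
    nlinarith
  linarith

/-- Theorem 1 (fixed length): for `0 < α < 1/2`, the FOFE encoding is injective
on sequences of a fixed finite length `T` over a countable vocabulary. -/
theorem fofe_unique_fixed_length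
    (V : Type*) [Countable V] [DecidableEq V]
    (α : ℝ) (hα0 : 0 < α) (hα : α < 1 / 2)
    (T : ℕ) (w w' : Fin T → V)
    (h : ∀ v : V, fofeCode α w v = fofeCode α w' v) :
    ∀ t, w t = w' t := by
  induction T with
  | zero => intro t; exact absurd t.isLt (by omega)
  | succ T ih =>
    have hα1 : α < 1 := by linarith
    -- last elements equal
    have hlast : w (Fin.last T) = w' (Fin.last T) := by
      by_contra hne
      set v := w (Fin.last T)
      have hv := h v
      rw [fofe_snoc, fofe_snoc, if_pos rfl,
        if_neg (fun hh => hne hh.symm)] at hv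
      set c := fofeCode α (fun i : Fin T => w i.castSucc) v
      set c' := fofeCode α (fun i : Fin T => w' i.castSucc) v
      have hc0 : 0 ≤ c := fofe_nonneg (le_of_lt hα0) _ _
      have hc' : c' ≤ (1 - α)⁻¹ := fofe_le (le_of_lt hα0) hα1 _ _
      have hinv : (1 - α)⁻¹ < 2 := by
        rw [inv_lt_comm₀ (by linarith) (by norm_num)]
        linarith
      nlinarith
    -- prefixes equal
    have hpre : ∀ v, fofeCode α (fun i : Fin T => w i.castSucc) v
        = fofeCode α (fun i : Fin T => w' i.castSucc) v := by
      intro v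
      have hv := h v
      rw [fofe_snoc, fofe_snoc, hlast] at hv
      have := mul_left_cancel₀ (ne_of_gt hα0) (by linarith : α * fofeCode α (fun i : Fin T => w i.castSucc) v = α * fofeCode α (fun i : Fin T => w' i.castSucc) v)
      exact this
    have := ih (fun i => w i.castSucc) (fun i => w' i.castSucc) hpre
    intro t
    refine Fin.lastCases ?_ ?_ t
    · exact hlast
    · intro i; exact this i
end

section
/- Let V be a countable vocabulary and let 0 < α < 1/2. Define the FOFE code of a finite sequence w₁, …, w_T from V as z : V → ℝ, z(v) = Σ_{t=1}^{T} α^{T−t} 𝟙[w_t = v]. Then the FOFE encoding is injective across all nonempty finite sequences, including sequences of different lengths: if a sequence w of length T and a sequence w' of length T' have equal FOFE codes (as functions V → ℝ), then T = T' and w_t = w'_t for all t. -/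
section Aux
variable {V : Type*} [DecidableEq V] {α : ℝ}

lemma fofeCode_nonneg (h0 : 0 ≤ α) {T : ℕ} (w : Fin T → V) (v : V) :
    0 ≤ fofeCode α w v := by
  refine Finset.sum_nonneg fun t _ => mul_nonneg (pow_nonneg h0 _) ?_
  split_ifs <;> norm_num

lemma fofeCode_succ (α : ℝ) {n : ℕ} (w : Fin (n+1) → V) (v : V) :
    fofeCode α w v = α * fofeCode α (fun t : Fin n => w t.castSucc) v
      + (if w (Fin.last n) = v then 1 else 0) := by
  simp only [fofeCode]
  rw [Fin.sum_univ_castSucc, Finset.mul_sum]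
  congr 1
  · refine Finset.sum_congr rfl fun t _ => ?_
    have ht : (n + 1) - 1 - (t.castSucc : Fin (n+1)).val = (n - 1 - t.val) + 1 := by
      simp [Fin.coe_castSucc]; omega
    rw [ht, pow_succ]; ring
  · simp

lemma fofeCode_le (h0 : 0 ≤ α) (h1 : α < 1) {T : ℕ} (w : Fin T → V) (v : V) :
    fofeCode α w v ≤ 1 / (1 - α) := by
  have step : fofeCode α w v ≤ ∑ t : Fin T, α ^ (T - 1 - t.val) := by
    refine Finset.sum_le_sum fun t _ => ?_
    have hind : (if w t = v then (1:ℝ) else 0) ≤ 1 := by split_ifs <;> norm_num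
    calc α ^ (T - 1 - t.val) * (if w t = v then (1:ℝ) else 0)
        ≤ α ^ (T - 1 - t.val) * 1 :=
          mul_le_mul_of_nonneg_left hind (pow_nonneg h0 _)
      _ = α ^ (T - 1 - t.val) := mul_one _
  have reflect : ∑ t : Fin T, α ^ (T - 1 - t.val) = ∑ i ∈ Finset.range T, α ^ i := by
    rw [Fin.sum_univ_eq_sum_range (fun i => α ^ (T - 1 - i)) T]
    exact Finset.sum_range_reflect (fun i => α ^ i) T
  have geom : ∑ i ∈ Finset.range T, α ^ i ≤ 1 / (1 - α) := by
    have hs : Summable fun n : ℕ => α ^ n := summable_geometric_of_lt_one h0 h1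
    have := Summable.sum_le_tsum (Finset.range T) (fun i _ => pow_nonneg h0 i) hs
    rw [tsum_geometric_of_lt_one h0 h1] at this
    rw [one_div]
    exact this
  rw [reflect] at step
  linarith

lemma fofeCode_last_ge_one (h0 : 0 ≤ α) {n : ℕ} (w : Fin (n+1) → V) :
    1 ≤ fofeCode α w (w (Fin.last n)) := by
  rw [fofeCode_succ, if_pos rfl]
  have := fofeCode_nonneg h0 (fun t : Fin n => w t.castSucc) (w (Fin.last n))
  linarith [mul_nonneg h0 this]

lemma fofe_aux (h0 : 0 < α) (hh : α < 1/2) :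
    ∀ (T T' : ℕ) (w : Fin T → V) (w' : Fin T' → V),
      (∀ v, fofeCode α w v = fofeCode α w' v) →
      ∃ hTT : T = T', ∀ t : Fin T, w t = w' (Fin.cast hTT t) := by
  have h1 : α < 1 := by linarith
  intro T
  induction T with
  | zero =>
    intro T' w w' h
    match T' with
    | 0 => exact ⟨rfl, fun t => t.elim0⟩
    | m + 1 =>
      exfalso
      have hge := fofeCode_last_ge_one h0.le w'
      have h2 := h (w' (Fin.last m))
      have hz : fofeCode α w (w' (Fin.last m)) = 0 := by simp [fofeCode]
      rw [hz] at h2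
      linarith
  | succ n ih =>
    intro T' w w' h
    match T' with
    | 0 =>
      exfalso
      have hge := fofeCode_last_ge_one h0.le w
      have h2 := h (w (Fin.last n))
      have hz : fofeCode α w' (w (Fin.last n)) = 0 := by simp [fofeCode]
      rw [hz] at h2
      linarith
    | m + 1 =>
      have hlast : w (Fin.last n) = w' (Fin.last m) := by
        by_contra hne
        have hge := fofeCode_last_ge_one h0.le w
        have hle := fofeCode_le h0.le h1 (fun t : Fin m => w' t.castSucc) (w (Fin.last n))
        have hlt : fofeCode α w' (w (Fin.last n)) < 1 := by
          rw [fofeCode_succ, if_neg (fun hc : w' (Fin.last m) = w (Fin.last n) => hne hc.symm)]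
          have hmul := mul_le_mul_of_nonneg_left hle h0.le
          have : α * (1 / (1 - α)) < 1 := by
            rw [mul_one_div, div_lt_one (by linarith)]
            linarith
          linarith
        have := h (w (Fin.last n))
        linarith
      have hpref : ∀ v, fofeCode α (fun t : Fin n => w t.castSucc) v
          = fofeCode α (fun t : Fin m => w' t.castSucc) v := by
        intro v
        have hv := h v
        rw [fofeCode_succ, fofeCode_succ, hlast] at hv
        have hc : α * fofeCode α (fun t : Fin n => w t.castSucc) v
            = α * fofeCode α (fun t : Fin m => w' t.castSucc) v := by linarith
        exact mul_left_cancel₀ h0.ne' hc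
      obtain ⟨hnm, heq⟩ := ih m (fun t => w t.castSucc) (fun t => w' t.castSucc) hpref
      subst hnm
      refine ⟨rfl, fun t => ?_⟩
      induction t using Fin.lastCases with
      | last => simpa using hlast
      | cast u => simpa using heq u

end Aux

/-- Theorem 1 (strong form): for `0 < α < 1/2`, the FOFE encoding is injective
across all nonempty finite sequences, including sequences of different lengths. -/
theorem fofe_unique
    (V : Type*) [Countable V] [DecidableEq V]
    (α : ℝ) (hα0 : 0 < α) (hα : α < 1 / 2)
    (T T' : ℕ) (hT : 1 ≤ T) (hT' : 1 ≤ T')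
    (w : Fin T → V) (w' : Fin T' → V)
    (h : ∀ v : V, fofeCode α w v = fofeCode α w' v) :
    ∃ hTT : T = T', ∀ t : Fin T, w t = w' (Fin.cast hTT t) := by
  exact fofe_aux hα0 hα T T' w w' h
end

section
/- Fix a finite length T ≥ 1 and a countable vocabulary V. There exists a finite set E ⊆ ℝ such that for every α with 1/2 ≤ α ≤ 1 and α ∉ E, the FOFE encoding with forgetting factor α is injective on sequences of length T from V: if two length-T sequences w, w' over V satisfy Σ_{t=1}^{T} α^{T−t} 𝟙[w_t = v] = Σ_{t=1}^{T} α^{T−t} 𝟙[w'_t = v] for all v ∈ V, then w = w'. -/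
/-- Auxiliary polynomial with coefficients in `{-1,0,1}` indexed by `f : Fin T → Fin 3`. -/
noncomputable def fofePoly {T : ℕ} (f : Fin T → Fin 3) : Polynomial ℝ :=
  ∑ t : Fin T, Polynomial.C ((f t : ℝ) - 1) * Polynomial.X ^ (T - 1 - t.val)

lemma fofe_exp_inj {T : ℕ} (t t' : Fin T) (h : T - 1 - t.val = T - 1 - t'.val) : t = t' := by
  have ht : t.val ≤ T - 1 := Nat.le_sub_one_of_lt t.isLt
  have ht' : t'.val ≤ T - 1 := Nat.le_sub_one_of_lt t'.isLt
  have : t.val = t'.val := by omega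
  exact Fin.ext this

lemma fofePoly_coeff {T : ℕ} (f : Fin T → Fin 3) (t : Fin T) :
    (fofePoly f).coeff (T - 1 - t.val) = (f t : ℝ) - 1 := by
  rw [fofePoly, Polynomial.finset_sum_coeff]
  rw [Finset.sum_eq_single t]
  · rw [Polynomial.coeff_C_mul, Polynomial.coeff_X_pow, if_pos rfl, mul_one]
  · intro t' _ hne
    rw [Polynomial.coeff_C_mul, Polynomial.coeff_X_pow, if_neg, mul_zero]
    exact fun h => hne (fofe_exp_inj t t' h).symm
  · simp

/-- Theorem 2: for fixed finite length `T ≥ 1` and countable vocabulary `V`,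
there is a finite exceptional set `E ⊆ ℝ` such that for every forgetting
factor `α` with `1/2 ≤ α ≤ 1` and `α ∉ E`, the FOFE encoding is injective on
length-`T` sequences over `V`. -/
theorem fofe_almost_unique
    (T : ℕ) (hT : 1 ≤ T)
    (V : Type*) [Countable V] [DecidableEq V] :
    ∃ E : Finset ℝ, ∀ α : ℝ, 1 / 2 ≤ α → α ≤ 1 → α ∉ E →
      ∀ w w' : Fin T → V, (∀ v : V, fofeCode α w v = fofeCode α w' v) → w = w' := by
  refine ⟨Finset.univ.biUnion (fun f : Fin T → Fin 3 => (fofePoly f).roots.toFinset),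
    fun α _ _ hα w w' hco => ?_⟩
  by_contra hne
  -- pick a position where they differ
  obtain ⟨t, ht⟩ : ∃ t, w t ≠ w' t := by
    by_contra h; push_neg at h; exact hne (funext h)
  set v : V := w t with hv
  -- encode the indicator difference as a Fin 3 valued function
  set f : Fin T → Fin 3 := fun t' =>
    if w t' = v then (if w' t' = v then 1 else 2) else (if w' t' = v then 0 else 1) with hf
  have hg : ∀ t', ((f t' : ℝ) - 1) =
      (if w t' = v then (1:ℝ) else 0) - (if w' t' = v then 1 else 0) := by
    intro t'
    by_cases h1 : w t' = v <;> by_cases h2 : w' t' = v <;> simp [hf, h1, h2] <;> norm_num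
  have hwt : w t = v := rfl
  have hw't : w' t ≠ v := fun h => ht h.symm
  -- the polynomial is nonzero: its coefficient at T-1-t is 1
  have hcoeff : (fofePoly f).coeff (T - 1 - t.val) = 1 := by
    rw [fofePoly_coeff, hg t, if_pos hwt, if_neg hw't]; ring
  have hpne : fofePoly f ≠ 0 := fun h => by simp [h] at hcoeff
  -- α is a root of it
  have heval : (fofePoly f).eval α = 0 := by
    have := hco v
    simp only [fofeCode] at this
    have : ∑ t' : Fin T, α ^ (T - 1 - t'.val) *
        ((if w t' = v then (1:ℝ) else 0) - (if w' t' = v then 1 else 0)) = 0 := by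
      simp only [mul_sub, Finset.sum_sub_distrib, this, sub_self]
    calc (fofePoly f).eval α
        = ∑ t' : Fin T, ((f t' : ℝ) - 1) * α ^ (T - 1 - t'.val) := by
          simp [fofePoly, Polynomial.eval_finset_sum]
      _ = 0 := by
          rw [← this]; exact Finset.sum_congr rfl fun t' _ => by rw [hg t']; ring
  exact hα (Finset.mem_biUnion.2 ⟨f, Finset.mem_univ f,
    Multiset.mem_toFinset.2 (Polynomial.mem_roots'.2 ⟨hpne, heval⟩)⟩)
end
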